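/- Let (x, y) ∈ ℝ^d × ℝ with x a zero-mean σ²-sub-Gaussian random vector and y a zero-mean σ²-sub-Gaussian random variable, and suppose E[y² x_j²] ≤ v₁ for some v₁ < ∞ and all j ∈ [d]. For τ₁, τ₂ > 0 define the shrunken variables x̃_j = sgn(x_j) min{|x_j|, τ₁} and ỹ = sgn(y) min{|y|, τ₂}. Then for every j ∈ [d], |E[ỹ x̃_j] − E[y x_j]| ≤ √(v₁ · P(|x_j| ≥ τ₁)) + √(v₁ · P(|y| ≥ τ₂)) ≤ √(2 v₁) · ( e^{−τ₁²/(4σ²)} + e^{−τ₂²/(4σ²)} ). -/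

import Mathlib

/-!
Write `x = x_j`. Since `sgn(a) min{|a|, τ}` is the clamp of `a` to `[-τ, τ]`, the error
`ỹ x̃ - y x = ỹ (x̃ - x) + (ỹ - y) x` has its first term bounded by `|y x|` and vanishing
unless `|x| ≥ τ₁`, and its second bounded by `|y x|` and vanishing unless `|y| ≥ τ₂`.
Cauchy–Schwarz against the indicators of these events gives the first bound, and the
Chernoff bound `P(|z| ≥ τ) ≤ 2 exp(-τ²/(2σ²))` for each sub-Gaussian coordinate the second.
-/

open MeasureTheory

noncomputable section

/-- A random variable `f` is sub-Gaussian with variance proxy `v` (zero-mean form):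
its moment generating function exists and satisfies `E[exp(t f)] ≤ exp(v t²/2)`. -/
def SubGMGF {Ω : Type*} [MeasurableSpace Ω] (μ : Measure Ω) (f : Ω → ℝ) (v : ℝ) : Prop :=
  AEMeasurable f μ ∧ ∀ t : ℝ, Integrable (fun ω => Real.exp (t * f ω)) μ ∧
    ∫ ω, Real.exp (t * f ω) ∂μ ≤ Real.exp (v * t ^ 2 / 2)

/-- A random vector `X` is sub-Gaussian with variance proxy `v`: every unit-vector
marginal `⟨u, X⟩` is sub-Gaussian with variance proxy `v`. -/
def VecSubG {Ω : Type*} [MeasurableSpace Ω] {d : ℕ} (μ : Measure Ω)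
    (X : Ω → EuclideanSpace ℝ (Fin d)) (v : ℝ) : Prop :=
  ∀ u : EuclideanSpace ℝ (Fin d), ‖u‖ = 1 → SubGMGF μ (fun ω => ∑ i, u i * X ω i) v

/-- Coordinatewise shrinkage `sgn(a) min{|a|, τ}`. -/
def shrink (τ a : ℝ) : ℝ := Real.sign a * min |a| τ

open ProbabilityTheory Real

lemma Real.measurable_sign : Measurable Real.sign :=
  Measurable.ite (measurableSet_lt measurable_id measurable_const) measurable_const
    (Measurable.ite (measurableSet_lt measurable_const measurable_id) measurable_const
      measurable_const)

lemma measurable_shrink (τ : ℝ) : Measurable (shrink τ) :=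
  Real.measurable_sign.mul (measurable_id.abs.min measurable_const)

lemma shrink_eq_max_min {τ : ℝ} (hτ : 0 ≤ τ) (a : ℝ) : shrink τ a = max (-τ) (min a τ) := by
  rcases lt_trichotomy a 0 with ha | rfl | ha
  · rw [shrink, Real.sign_of_neg ha, abs_of_neg ha]
    grind
  · simp [shrink, hτ]
  · rw [shrink, Real.sign_of_pos ha, abs_of_pos ha]
    grind

lemma abs_shrink_le_abs {τ : ℝ} (hτ : 0 ≤ τ) (a : ℝ) : |shrink τ a| ≤ |a| := by
  rw [shrink_eq_max_min hτ]
  grind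

lemma abs_shrink_sub_le {τ : ℝ} (hτ : 0 ≤ τ) (a : ℝ) :
    |shrink τ a - a| ≤ if τ ≤ |a| then |a| else 0 := by
  rw [shrink_eq_max_min hτ]
  grind

lemma abs_shrink_mul_shrink_sub_mul_le {τ₁ τ₂ : ℝ} (hτ₁ : 0 ≤ τ₁) (hτ₂ : 0 ≤ τ₂) (a b : ℝ) :
    |shrink τ₂ b * shrink τ₁ a - b * a| ≤
      (if τ₁ ≤ |a| then |b * a| else 0) + (if τ₂ ≤ |b| then |b * a| else 0) :=
  calc |shrink τ₂ b * shrink τ₁ a - b * a|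
      = |shrink τ₂ b * (shrink τ₁ a - a) + (shrink τ₂ b - b) * a| := by ring_nf
    _ ≤ |shrink τ₂ b| * |shrink τ₁ a - a| + |shrink τ₂ b - b| * |a| := by
      rw [← abs_mul, ← abs_mul]
      exact abs_add_le _ _
    _ ≤ |b| * (if τ₁ ≤ |a| then |a| else 0) + (if τ₂ ≤ |b| then |b| else 0) * |a| := by
      apply add_le_add
      · exact mul_le_mul (abs_shrink_le_abs hτ₂ b) (abs_shrink_sub_le hτ₁ a) (abs_nonneg _)
          (abs_nonneg _)
      · exact mul_le_mul_of_nonneg_right (abs_shrink_sub_le hτ₂ b) (abs_nonneg _)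
    _ = (if τ₁ ≤ |a| then |b * a| else 0) + (if τ₂ ≤ |b| then |b * a| else 0) := by
      split_ifs <;> simp [abs_mul]

lemma sqrt_mul_le_sqrt_two_mul_mul_exp {v p τ c : ℝ} (hv : 0 ≤ v)
    (hp : p ≤ 2 * exp (-τ ^ 2 / (2 * c))) :
    √(v * p) ≤ √(2 * v) * exp (-τ ^ 2 / (4 * c)) :=
  calc √(v * p) ≤ √(2 * v * exp (-τ ^ 2 / (2 * c))) := by
        refine sqrt_le_sqrt ?_
        linarith [mul_le_mul_of_nonneg_left hp hv]
    _ = √(2 * v) * exp (-τ ^ 2 / (4 * c)) := by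
        rw [sqrt_mul (by positivity), ← exp_half]
        ring_nf

section Integrals

variable {Ω : Type*} [MeasurableSpace Ω] {μ : Measure Ω}

lemma setIntegral_abs_le_sqrt_integral_sq_mul [IsFiniteMeasure μ] {g : Ω → ℝ}
    (hg : MemLp g 2 μ) (s : Set Ω) :
    ∫ ω in s, |g ω| ∂μ ≤ √((∫ ω, g ω ^ 2 ∂μ) * μ.real s) := by
  have hg' : MemLp (fun ω => |g ω|) (ENNReal.ofReal 2) (μ.restrict s) := by
    simpa using hg.norm.restrict s
  have hone : MemLp (fun _ => (1 : ℝ)) (ENNReal.ofReal 2) (μ.restrict s) := memLp_const 1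
  have holder := integral_mul_le_Lp_mul_Lq_of_nonneg Real.HolderConjugate.two_two
    (Filter.Eventually.of_forall fun ω => abs_nonneg (g ω))
    (Filter.Eventually.of_forall fun _ => zero_le_one) hg' hone
  have hsq : ∫ ω in s, g ω ^ 2 ∂μ ≤ ∫ ω, g ω ^ 2 ∂μ :=
    setIntegral_le_integral (hg.integrable_sq) (Filter.Eventually.of_forall fun ω => sq_nonneg _)
  simp only [setIntegral_const, smul_eq_mul, rpow_two, one_pow, mul_one, sq_abs,
    ← sqrt_eq_rpow] at holder
  rw [sqrt_mul (integral_nonneg fun ω => sq_nonneg (g ω))]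
  exact holder.trans (by gcongr)

theorem abs_integral_shrink_mul_shrink_sub_le [IsFiniteMeasure μ] {X Y : Ω → ℝ}
    (hX : Measurable X) (hY : Measurable Y) (hXY : MemLp (fun ω => Y ω * X ω) 2 μ)
    {v τ₁ τ₂ : ℝ} (hmom : ∫ ω, Y ω ^ 2 * X ω ^ 2 ∂μ ≤ v) (hτ₁ : 0 ≤ τ₁) (hτ₂ : 0 ≤ τ₂) :
    |∫ ω, shrink τ₂ (Y ω) * shrink τ₁ (X ω) ∂μ - ∫ ω, Y ω * X ω ∂μ| ≤
      √(v * μ.real {ω | τ₁ ≤ |X ω|}) + √(v * μ.real {ω | τ₂ ≤ |Y ω|}) := by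
  set A := {ω | τ₁ ≤ |X ω|}
  set B := {ω | τ₂ ≤ |Y ω|}
  have hA : MeasurableSet A := measurableSet_le measurable_const hX.abs
  have hB : MeasurableSet B := measurableSet_le measurable_const hY.abs
  have hYX : Integrable (fun ω => Y ω * X ω) μ := hXY.integrable one_le_two
  have hshrink : Integrable (fun ω => shrink τ₂ (Y ω) * shrink τ₁ (X ω)) μ :=
    hYX.mono
      (((measurable_shrink τ₂).comp hY).mul ((measurable_shrink τ₁).comp hX)).aestronglyMeasurable
      (Filter.Eventually.of_forall fun ω => by
        simp only [Real.norm_eq_abs, abs_mul]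
        exact mul_le_mul (abs_shrink_le_abs hτ₂ _) (abs_shrink_le_abs hτ₁ _) (abs_nonneg _)
          (abs_nonneg _))
  calc |∫ ω, shrink τ₂ (Y ω) * shrink τ₁ (X ω) ∂μ - ∫ ω, Y ω * X ω ∂μ|
      = |∫ ω, (shrink τ₂ (Y ω) * shrink τ₁ (X ω) - Y ω * X ω) ∂μ| := by
        rw [integral_sub hshrink hYX]
    _ ≤ ∫ ω, |shrink τ₂ (Y ω) * shrink τ₁ (X ω) - Y ω * X ω| ∂μ :=
        abs_integral_le_integral_abs
    _ ≤ ∫ ω, (A.indicator (fun ω => |Y ω * X ω|) ω + B.indicator (fun ω => |Y ω * X ω|) ω) ∂μ := by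
        refine integral_mono (hshrink.sub hYX).abs
          ((hYX.abs.indicator hA).add (hYX.abs.indicator hB)) fun ω => ?_
        simp only [Set.indicator_apply]
        exact abs_shrink_mul_shrink_sub_mul_le hτ₁ hτ₂ (X ω) (Y ω)
    _ = ∫ ω in A, |Y ω * X ω| ∂μ + ∫ ω in B, |Y ω * X ω| ∂μ := by
        rw [integral_add (hYX.abs.indicator hA) (hYX.abs.indicator hB), integral_indicator hA,
          integral_indicator hB]
    _ ≤ √((∫ ω, (Y ω * X ω) ^ 2 ∂μ) * μ.real A) + √((∫ ω, (Y ω * X ω) ^ 2 ∂μ) * μ.real B) :=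
        add_le_add (setIntegral_abs_le_sqrt_integral_sq_mul hXY A)
          (setIntegral_abs_le_sqrt_integral_sq_mul hXY B)
    _ ≤ √(v * μ.real A) + √(v * μ.real B) := by
        simp only [mul_pow]
        gcongr

lemma SubGMGF.hasSubgaussianMGF {f : Ω → ℝ} {v : ℝ} (hf : SubGMGF μ f v) :
    HasSubgaussianMGF f v.toNNReal μ where
  integrable_exp_mul t := (hf.2 t).1
  mgf_le t := (hf.2 t).2.trans (by gcongr; exact le_max_left v 0)

lemma VecSubG.subGMGF_apply {d : ℕ} {X : Ω → EuclideanSpace ℝ (Fin d)} {v : ℝ}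
    (hX : VecSubG μ X v) (j : Fin d) : SubGMGF μ (fun ω => X ω j) v := by
  simpa [PiLp.single_apply] using hX (EuclideanSpace.single j 1) (by simp)

lemma ProbabilityTheory.HasSubgaussianMGF.measureReal_abs_ge_le {X : Ω → ℝ} {c : NNReal}
    (h : HasSubgaussianMGF X c μ) {ε : ℝ} (hε : 0 ≤ ε) :
    μ.real {ω | ε ≤ |X ω|} ≤ 2 * exp (-ε ^ 2 / (2 * c)) := by
  have hunion : {ω | ε ≤ |X ω|} = {ω | ε ≤ X ω} ∪ {ω | ε ≤ (-X) ω} := by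
    ext ω
    simp [le_abs]
  calc μ.real {ω | ε ≤ |X ω|} ≤ μ.real {ω | ε ≤ X ω} + μ.real {ω | ε ≤ (-X) ω} := by
        rw [hunion]
        exact measureReal_union_le _ _
    _ ≤ 2 * exp (-ε ^ 2 / (2 * c)) := by
        linarith [h.measure_ge_le hε, h.neg.measure_ge_le hε]

lemma ProbabilityTheory.HasSubgaussianMGF.memLp_two_mul {X Y : Ω → ℝ} {cX cY : NNReal}
    (hX : HasSubgaussianMGF X cX μ) (hY : HasSubgaussianMGF Y cY μ) :
    MemLp (fun ω => X ω * Y ω) 2 μ := by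
  have : ENNReal.HolderTriple 4 4 2 := ⟨by
    rw [← two_mul, show (4 : ENNReal) = 2 * 2 by norm_num, ENNReal.mul_inv (by simp) (by simp),
      ← mul_assoc, ENNReal.mul_inv_cancel (by simp) (by simp), one_mul]⟩
  exact (by exact_mod_cast hY.memLp 4 : MemLp Y 4 μ).mul' (by exact_mod_cast hX.memLp 4)

end Integrals

theorem stmt15_general (d : ℕ) (σ v₁ τ₁ τ₂ : ℝ) (hv₁ : 0 < v₁)
    (hτ₁ : 0 < τ₁) (hτ₂ : 0 < τ₂)
    (μ : Measure (EuclideanSpace ℝ (Fin d) × ℝ)) [IsProbabilityMeasure μ]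
    -- x is a zero-mean σ²-sub-Gaussian random vector
    (hxsub : VecSubG μ (fun p => p.1) (σ ^ 2))
    -- y is a zero-mean σ²-sub-Gaussian random variable
    (hysub : SubGMGF μ (fun p => p.2) (σ ^ 2))
    -- second-moment bound E[y² x_j²] ≤ v₁
    (hmom : ∀ j : Fin d, ∫ p, p.2 ^ 2 * p.1 j ^ 2 ∂μ ≤ v₁) :
    ∀ j : Fin d,
      |∫ p, shrink τ₂ p.2 * shrink τ₁ (p.1 j) ∂μ - ∫ p, p.2 * p.1 j ∂μ|
          ≤ Real.sqrt (v₁ * (μ {p | τ₁ ≤ |p.1 j|}).toReal)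
            + Real.sqrt (v₁ * (μ {p | τ₂ ≤ |p.2|}).toReal) ∧
      |∫ p, shrink τ₂ p.2 * shrink τ₁ (p.1 j) ∂μ - ∫ p, p.2 * p.1 j ∂μ|
          ≤ Real.sqrt (2 * v₁) *
            (Real.exp (-(τ₁ ^ 2) / (4 * σ ^ 2)) + Real.exp (-(τ₂ ^ 2) / (4 * σ ^ 2))) := by
  intro j
  have hX := (hxsub.subGMGF_apply j).hasSubgaussianMGF
  have hY := hysub.hasSubgaussianMGF
  have hbias := abs_integral_shrink_mul_shrink_sub_le (by fun_prop) measurable_snd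
    (hY.memLp_two_mul hX) (hmom j) hτ₁.le hτ₂.le
  refine ⟨hbias, hbias.trans ?_⟩
  rw [mul_add, ← Real.coe_toNNReal _ (sq_nonneg σ)]
  exact add_le_add
    (sqrt_mul_le_sqrt_two_mul_mul_exp hv₁.le (hX.measureReal_abs_ge_le hτ₁.le))
    (sqrt_mul_le_sqrt_two_mul_mul_exp hv₁.le (hY.measureReal_abs_ge_le hτ₂.le))

theorem stmt15 (d : ℕ) (σ v₁ τ₁ τ₂ : ℝ) (hσ : 0 < σ) (hv₁ : 0 < v₁)
    (hτ₁ : 0 < τ₁) (hτ₂ : 0 < τ₂)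
    (μ : Measure (EuclideanSpace ℝ (Fin d) × ℝ)) [IsProbabilityMeasure μ]
    -- x is a zero-mean σ²-sub-Gaussian random vector
    (hxsub : VecSubG μ (fun p => p.1) (σ ^ 2)) (hxmean : ∀ i, ∫ p, p.1 i ∂μ = 0)
    -- y is a zero-mean σ²-sub-Gaussian random variable
    (hysub : SubGMGF μ (fun p => p.2) (σ ^ 2)) (hymean : ∫ p, p.2 ∂μ = 0)
    -- second-moment bound E[y² x_j²] ≤ v₁
    (hmom : ∀ j : Fin d, ∫ p, p.2 ^ 2 * p.1 j ^ 2 ∂μ ≤ v₁) :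
    ∀ j : Fin d,
      |∫ p, shrink τ₂ p.2 * shrink τ₁ (p.1 j) ∂μ - ∫ p, p.2 * p.1 j ∂μ|
          ≤ Real.sqrt (v₁ * (μ {p | τ₁ ≤ |p.1 j|}).toReal)
            + Real.sqrt (v₁ * (μ {p | τ₂ ≤ |p.2|}).toReal) ∧
      |∫ p, shrink τ₂ p.2 * shrink τ₁ (p.1 j) ∂μ - ∫ p, p.2 * p.1 j ∂μ|
          ≤ Real.sqrt (2 * v₁) *
            (Real.exp (-(τ₁ ^ 2) / (4 * σ ^ 2)) + Real.exp (-(τ₂ ^ 2) / (4 * σ ^ 2))) :=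
  stmt15_general d σ v₁ τ₁ τ₂ hv₁ hτ₁ hτ₂ μ hxsub hysub hmom
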